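/- arXiv:1306.1590 — 4 statements merged into one kernel-verified Lean document; each statement's English description precedes it below -/
import Mathlib

section
/- For every positive integer a, if α, β, γ are the three real roots of x³ - 3a²x + 1 with α < β < γ, then 0 < |β| < 1 < |γ| < |α|. -/
set_option maxHeartbeats 1000000


theorem phi_roots_abs (a : ℕ) (ha : 0 < a) (α β γ : ℝ)
    (hα : α ^ 3 - 3 * (a : ℝ) ^ 2 * α + 1 = 0)
    (hβ : β ^ 3 - 3 * (a : ℝ) ^ 2 * β + 1 = 0)
    (hγ : γ ^ 3 - 3 * (a : ℝ) ^ 2 * γ + 1 = 0)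
    (hαβ : α < β) (hβγ : β < γ) :
    0 < |β| ∧ |β| < 1 ∧ 1 < |γ| ∧ |γ| < |α| := by
  have ha1 : (1:ℝ) ≤ (a:ℝ) := by exact_mod_cast ha
  have ha2 : (3:ℝ) ≤ 3 * (a:ℝ)^2 := by nlinarith
  -- Vieta-style relations
  have h1 : (α - β) * (α^2 + α*β + β^2 - 3*(a:ℝ)^2) = 0 := by linear_combination hα - hβ
  have h1' : α^2 + α*β + β^2 - 3*(a:ℝ)^2 = 0 := by
    rcases mul_eq_zero.mp h1 with h | h
    · exact absurd h (by linarith)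
    · exact h
  have h2 : (β - γ) * (β^2 + β*γ + γ^2 - 3*(a:ℝ)^2) = 0 := by linear_combination hβ - hγ
  have h2' : β^2 + β*γ + γ^2 - 3*(a:ℝ)^2 = 0 := by
    rcases mul_eq_zero.mp h2 with h | h
    · exact absurd h (by linarith)
    · exact h
  have hs : (α - γ) * (α + β + γ) = 0 := by linear_combination h1' - h2'
  have hsum : α + β + γ = 0 := by
    rcases mul_eq_zero.mp hs with h | h
    · exact absurd h (by linarith)
    · exact h
  have hβγ2 : β * γ = α^2 - 3*(a:ℝ)^2 := by linear_combination β * hsum - h1'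
  have hprod : α * β * γ = -1 := by linear_combination α * hβγ2 + hα
  -- no root in [-1, 0]
  have noroot : ∀ x : ℝ, x ^ 3 - 3 * (a : ℝ) ^ 2 * x + 1 = 0 → x < -1 ∨ 0 < x := by
    intro x hx
    by_contra hcon
    push_neg at hcon
    obtain ⟨hx1, hx0⟩ := hcon
    nlinarith [mul_nonneg (neg_nonneg.mpr hx0) (by nlinarith : (0:ℝ) ≤ 3 - x^2),
      mul_nonneg (neg_nonneg.mpr hx0) (by nlinarith : (0:ℝ) ≤ 3*(a:ℝ)^2 - 3)]
  have hβcase := noroot β hβ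
  have hβpos : 0 < β := by
    rcases hβcase with h | h
    · exfalso
      have hαlt : α < -1 := lt_trans hαβ h
      have hγ2 : 2 < γ := by nlinarith
      nlinarith [mul_pos (mul_pos (by linarith : (0:ℝ) < -α) (by linarith : (0:ℝ) < -β))
        (by linarith : (0:ℝ) < γ)]
    · exact h
  have hαneg : α < -1 := by
    rcases noroot α hα with h | h
    · exact h
    · exfalso; nlinarith
  have hγpos : 0 < γ := lt_trans hβpos hβγ
  -- key: (β-1)(γ-1) < 0
  have hq : (α - 1) * (α^2 + α + 1 - 3*(a:ℝ)^2) = 3*(a:ℝ)^2 - 2 := by linear_combination hα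
  have hkey : α^2 + α + 1 - 3*(a:ℝ)^2 < 0 := by nlinarith
  have hfac_eq : (β - 1) * (γ - 1) = α^2 + α + 1 - 3*(a:ℝ)^2 := by
    linear_combination hβγ2 - hsum
  have hfac : (β - 1) * (γ - 1) < 0 := by rw [hfac_eq]; exact hkey
  have hβ1 : β < 1 := by nlinarith
  have hγ1 : 1 < γ := by nlinarith
  have hγα : γ < -α := by linarith
  rw [abs_of_pos hβpos, abs_of_pos hγpos, abs_of_neg (by linarith : α < 0)]
  exact ⟨hβpos, hβ1, hγ1, hγα⟩
end

section
/- Let a be a positive integer and let α be the root of x³ - 3a²x + 1 of largest absolute value (so α < -a). Then α² is not a Salem number: α² has a Galois conjugate γ² with 1 < γ² < α², hence α² has a real conjugate strictly between 1 and α² that is neither α² nor 1/α² and does not lie on the unit circle. -/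
open Polynomial

/-- A Salem number: a real algebraic integer `x > 1` such that `1/x` is a Galois
conjugate of `x` and all Galois conjugates other than `x` and `1/x` lie on the
unit circle. -/
def IsSalem (x : ℝ) : Prop :=
  1 < x ∧ IsIntegral ℤ x ∧
  (Polynomial.aeval x⁻¹) (minpoly ℚ x) = 0 ∧
  ∀ z : ℂ, (Polynomial.aeval z) (minpoly ℚ x) = 0 →
    z = (x : ℂ) ∨ z = (x : ℂ)⁻¹ ∨ ‖z‖ = 1

/-- The candidate minimal polynomial of `α²`. -/
noncomputable def qpoly (a : ℕ) : ℚ[X] :=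
  X^3 - C (6*(a:ℚ)^2) * X^2 + C (9*(a:ℚ)^4) * X - 1

lemma qpoly_monic (a : ℕ) : (qpoly a).Monic := by
  unfold qpoly; monicity!

lemma qpoly_natDegree (a : ℕ) : (qpoly a).natDegree = 3 := by
  unfold qpoly; compute_degree!

lemma qpoly_no_rat_root (a : ℕ) (ha : 0 < a) (r : ℚ)
    (hr : aeval r (qpoly a) = 0) : False := by
  have hr' : r^3 - 6*(a:ℚ)^2*r^2 + 9*(a:ℚ)^4*r - 1 = 0 := by
    simpa [qpoly] using hr
  -- r is integral over ℤ
  have hint : IsIntegral ℤ r := by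
    refine ⟨Polynomial.X^3 - C (6*(a:ℤ)^2) * X^2 + C (9*(a:ℤ)^4) * X - 1, by monicity!, ?_⟩
    rw [← aeval_def]
    simp only [map_sub, map_add, map_mul, map_pow, aeval_X, aeval_C, map_one,
      map_ofNat, map_natCast, map_intCast, algebraMap_int_eq, eq_intCast]
    linear_combination hr'
  obtain ⟨m, rfl⟩ := IsIntegrallyClosed.isIntegral_iff.mp hint
  simp only [algebraMap_int_eq, eq_intCast] at hr'
  have hmz : m^3 - 6*(a:ℤ)^2*m^2 + 9*(a:ℤ)^4*m - 1 = 0 := by exact_mod_cast hr'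
  have hdvd : m ∣ 1 := ⟨m^2 - 6*(a:ℤ)^2*m + 9*(a:ℤ)^4, by linear_combination -hmz⟩
  have ha1 : (1:ℤ) ≤ (a:ℤ) := by exact_mod_cast ha
  have ha2 : (1:ℤ) ≤ (a:ℤ)^2 := by nlinarith
  rcases Int.isUnit_iff.mp (isUnit_of_dvd_one hdvd) with rfl | rfl
  · nlinarith [hmz, ha2]
  · nlinarith [hmz, ha2]

lemma qpoly_irreducible (a : ℕ) (ha : 0 < a) : Irreducible (qpoly a) := by
  rw [(qpoly_monic a).irreducible_iff_roots_eq_zero_of_degree_le_three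
      (by rw [qpoly_natDegree]; norm_num) (by rw [qpoly_natDegree])]
  rw [Multiset.eq_zero_iff_forall_notMem]
  intro r hr
  rw [mem_roots ((qpoly_monic a).ne_zero), IsRoot] at hr
  exact qpoly_no_rat_root a ha r (by rw [← coe_aeval_eq_eval] at hr; exact hr)

theorem alpha_sq_not_salem (a : ℕ) (ha : 0 < a) (α β γ : ℝ)
    (hα : α ^ 3 - 3 * (a : ℝ) ^ 2 * α + 1 = 0)
    (hβ : β ^ 3 - 3 * (a : ℝ) ^ 2 * β + 1 = 0)
    (hγ : γ ^ 3 - 3 * (a : ℝ) ^ 2 * γ + 1 = 0)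
    (hαβ : α < β) (hβγ : β < γ) :
    (Polynomial.aeval (γ ^ 2)) (minpoly ℚ (α ^ 2)) = 0 ∧
    1 < γ ^ 2 ∧ γ ^ 2 < α ^ 2 ∧
    γ ^ 2 ≠ α ^ 2 ∧ γ ^ 2 ≠ (α ^ 2)⁻¹ ∧ |γ ^ 2| ≠ 1 ∧
    ¬ IsSalem (α ^ 2) := by
  have ha1 : (1:ℝ) ≤ (a:ℝ) := by exact_mod_cast ha
  -- symmetric function identities
  have e1 : α^2 + α*β + β^2 = 3*(a:ℝ)^2 := by
    have h : (α - β) * (α^2 + α*β + β^2 - 3*(a:ℝ)^2) = 0 := by linear_combination hα - hβ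
    rcases mul_eq_zero.mp h with h' | h'
    · exact absurd h' (sub_ne_zero.mpr (ne_of_lt hαβ))
    · linarith
  have e2 : β^2 + β*γ + γ^2 = 3*(a:ℝ)^2 := by
    have h : (β - γ) * (β^2 + β*γ + γ^2 - 3*(a:ℝ)^2) = 0 := by linear_combination hβ - hγ
    rcases mul_eq_zero.mp h with h' | h'
    · exact absurd h' (sub_ne_zero.mpr (ne_of_lt hβγ))
    · linarith
  have esum : α + β + γ = 0 := by
    have h : (α - γ) * (α + β + γ) = 0 := by linear_combination e1 - e2
    rcases mul_eq_zero.mp h with h' | h'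
    · exact absurd h' (sub_ne_zero.mpr (ne_of_lt (hαβ.trans hβγ)))
    · exact h'
  have epair : α*β + β*γ + γ*α = -(3*(a:ℝ)^2) := by
    linear_combination (α + β) * esum - e1
  have eprod : α * β * γ = -1 := by
    have h1 : α*β*(α+β) = 1 := by linear_combination α*e1 - hα
    have h2 : α + β = -γ := by linarith
    rw [h2] at h1
    linarith [h1]
  have hγ1 : 1 < γ := by
    by_contra h
    push_neg at h
    have hfac : (1-α)*(1-β)*(1-γ) = 2 - 3*(a:ℝ)^2 := by
      linear_combination -esum + epair - eprod
    nlinarith [mul_nonneg (mul_nonneg (by linarith : (0:ℝ) ≤ 1-α) (by linarith : (0:ℝ) ≤ 1-β))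
      (by linarith : (0:ℝ) ≤ 1-γ), hfac]
  have hα0 : α < 0 := by
    by_contra h
    push_neg at h
    nlinarith [eprod, mul_nonneg (mul_nonneg h (by linarith : (0:ℝ) ≤ β)) (by linarith : (0:ℝ) ≤ γ)]
  have hβ0 : 0 < β := by
    by_contra h
    push_neg at h
    nlinarith [eprod, mul_nonneg (mul_nonneg (by linarith : (0:ℝ) ≤ -α) (by linarith : (0:ℝ) ≤ -β))
      (by linarith : (0:ℝ) ≤ γ)]
  have hγ2 : 1 < γ^2 := by nlinarith
  have hαγ : γ^2 < α^2 := by nlinarith [esum, hβ0, hγ1, mul_pos hβ0 (by linarith : (0:ℝ) < γ)]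
  -- minpoly of α² is qpoly a
  have haq : (aeval (α^2)) (qpoly a) = 0 := by
    simp only [qpoly, map_sub, map_add, map_mul, map_pow, aeval_X, aeval_C, map_one,
      map_ofNat, eq_ratCast]
    push_cast
    linear_combination (α^3 - 3*(a:ℝ)^2*α - 1) * hα
  have hgq : (aeval (γ^2)) (qpoly a) = 0 := by
    simp only [qpoly, map_sub, map_add, map_mul, map_pow, aeval_X, aeval_C, map_one,
      map_ofNat, eq_ratCast]
    push_cast
    linear_combination (γ^3 - 3*(a:ℝ)^2*γ - 1) * hγ
  have hmin : minpoly ℚ (α^2) = qpoly a :=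
    (minpoly.eq_of_irreducible_of_monic (qpoly_irreducible a ha) haq (qpoly_monic a)).symm
  have hmain : (Polynomial.aeval (γ ^ 2)) (minpoly ℚ (α ^ 2)) = 0 := by rw [hmin]; exact hgq
  have hne1 : γ ^ 2 ≠ α ^ 2 := ne_of_lt hαγ
  have hinv : (α^2)⁻¹ < 1 := by
    rw [inv_lt_one_iff₀]; right; linarith
  have hne2 : γ ^ 2 ≠ (α ^ 2)⁻¹ := by intro h; rw [h] at hγ2; linarith
  have habs : |γ ^ 2| ≠ 1 := by
    rw [abs_of_pos (by linarith : (0:ℝ) < γ^2)]; linarith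
  refine ⟨hmain, hγ2, hαγ, hne1, hne2, habs, ?_⟩
  rintro ⟨-, -, -, hall⟩
  have hz : (aeval ((γ:ℂ)^2)) (minpoly ℚ (α^2)) = 0 := by
    have h2 := congrArg (algebraMap ℝ ℂ) hmain
    rw [map_zero, ← aeval_algebraMap_apply] at h2
    simpa using h2
  have hz' : (aeval (((γ^2 : ℝ)):ℂ)) (minpoly ℚ (α^2)) = 0 := by push_cast; exact hz
  rcases hall ((γ^2 : ℝ):ℂ) hz' with h | h | h
  · exact hne1 (by exact_mod_cast h)
  · apply hne2
    rw [← Complex.ofReal_inv] at h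
    exact_mod_cast h
  · rw [Complex.norm_real, Real.norm_eq_abs] at h
    exact habs h
end

section
/- The polynomial (w³-1)T² - (w³-1) - (z³-1)(s²-1) in the variable T is irreducible over the field ℂ(s,z,w). -/
open MvPolynomial

noncomputable section

abbrev Kszw : Type := FractionRing (MvPolynomial (Fin 3) ℂ)

noncomputable def sK : Kszw := algebraMap (MvPolynomial (Fin 3) ℂ) Kszw (X 0)
noncomputable def zK : Kszw := algebraMap (MvPolynomial (Fin 3) ℂ) Kszw (X 1)
noncomputable def wK : Kszw := algebraMap (MvPolynomial (Fin 3) ℂ) Kszw (X 2)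

/-- Descent lemma: if `p` is a nonconstant prime polynomial with `p ∤ q`, `p ∤ m`,
then `x² (p q) = y² m` is impossible with `y ≠ 0`. -/
lemma descent {F : Type*} [CommRing F] [IsDomain F] (p q m : Polynomial F)
    (hp : Prime p) (hpd : 0 < p.natDegree) (hq : ¬ p ∣ q) (hm : ¬ p ∣ m) :
    ∀ n : ℕ, ∀ x y : Polynomial F, y ≠ 0 → y.natDegree ≤ n →
      x ^ 2 * (p * q) ≠ y ^ 2 * m := by
  intro n
  induction n with
  | zero =>
    intro x y hy hdeg heq
    have hm0 : m ≠ 0 := fun h => hm (h ▸ dvd_zero p)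
    have hpy2m : p ∣ y ^ 2 * m := ⟨x ^ 2 * q, by linear_combination -heq⟩
    have hpy : p ∣ y := by
      rcases hp.dvd_mul.mp hpy2m with h | h
      · exact hp.dvd_of_dvd_pow h
      · exact absurd h hm
    have h1 := Polynomial.natDegree_le_of_dvd hpy hy
    omega
  | succ n ih =>
    intro x y hy hdeg heq
    have hm0 : m ≠ 0 := fun h => hm (h ▸ dvd_zero p)
    have hp0 : p ≠ 0 := hp.ne_zero
    have hpy2m : p ∣ y ^ 2 * m := ⟨x ^ 2 * q, by linear_combination -heq⟩
    have hpy : p ∣ y := by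
      rcases hp.dvd_mul.mp hpy2m with h | h
      · exact hp.dvd_of_dvd_pow h
      · exact absurd h hm
    obtain ⟨y₁, rfl⟩ := hpy
    have hy₁ : y₁ ≠ 0 := right_ne_zero_of_mul hy
    have heq1 : x ^ 2 * q = p * (y₁ ^ 2 * m) := by
      apply mul_left_cancel₀ hp0
      linear_combination heq
    have hpx : p ∣ x := by
      have hd : p ∣ x ^ 2 * q := ⟨y₁ ^ 2 * m, heq1⟩
      rcases hp.dvd_mul.mp hd with h | h
      · exact hp.dvd_of_dvd_pow h
      · exact absurd h hq
    obtain ⟨x₁, rfl⟩ := hpx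
    have heq2 : x₁ ^ 2 * (p * q) = y₁ ^ 2 * m := by
      apply mul_left_cancel₀ hp0
      linear_combination heq1
    have hdeg1 : y₁.natDegree ≤ n := by
      have hh := Polynomial.natDegree_mul hp0 hy₁ ▸ hdeg
      omega
    exact ih x₁ y₁ hy₁ hdeg1 heq2

/-- The change-of-variables isomorphism `ℂ[s,z,w] ≃ ℂ[z,w... ][X]` putting `w` first. -/
noncomputable def eqv : MvPolynomial (Fin 3) ℂ ≃ₐ[ℂ] Polynomial (MvPolynomial (Fin 2) ℂ) :=
  (MvPolynomial.renameEquiv ℂ (Equiv.swap (0 : Fin 3) 2)).trans (MvPolynomial.finSuccEquiv ℂ 2)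

lemma eqv_X2 : eqv (X 2) = Polynomial.X := by
  simp [eqv, MvPolynomial.renameEquiv_apply, MvPolynomial.rename_X]
  exact MvPolynomial.finSuccEquiv_X_zero

lemma eqv_X1 : eqv (X 1) = Polynomial.C (X 0) := by
  simp [eqv, MvPolynomial.renameEquiv_apply, MvPolynomial.rename_X]
  rw [show ((Equiv.swap (0 : Fin 3) 2) 1) = Fin.succ 0 by decide]
  exact MvPolynomial.finSuccEquiv_X_succ

lemma eqv_X0 : eqv (X 0) = Polynomial.C (X 1) := by
  simp [eqv, MvPolynomial.renameEquiv_apply, MvPolynomial.rename_X]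
  rw [show ((2 : Fin 3)) = Fin.succ 1 by decide]
  exact MvPolynomial.finSuccEquiv_X_succ

set_option maxHeartbeats 1000000 in
set_option synthInstance.maxHeartbeats 400000 in
/-- Ring-level core: the equation `x²·(w³-1) = y²·((w³-1)+(z³-1)(s²-1))` has no
nontrivial solution in `ℂ[s,z,w]`. -/
lemma ring_core (x y : MvPolynomial (Fin 3) ℂ) (hy : y ≠ 0) :
    x ^ 2 * (X 2 ^ 3 - 1) ≠ y ^ 2 * ((X 2 ^ 3 - 1) + (X 1 ^ 3 - 1) * (X 0 ^ 2 - 1)) := by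
  intro hR
  have he2 := eqv_X2
  have he1 := eqv_X1
  have he0 := eqv_X0
  set e := eqv with he
  set u : MvPolynomial (Fin 2) ℂ := (X 0 ^ 3 - 1) * (X 1 ^ 2 - 1) with hu
  have hune : u ≠ 0 := by
    intro h
    have hh := congrArg (MvPolynomial.eval (fun _ => (2 : ℂ))) h
    simp [hu] at hh
    norm_num [sub_eq_zero] at hh
  have heR : (e x) ^ 2 * (Polynomial.X ^ 3 - 1)
      = (e y) ^ 2 * ((Polynomial.X ^ 3 - 1) + Polynomial.C u) := by
    have := congrArg e hR
    simp only [map_mul, map_pow, map_add, map_sub, map_one, he2, he1, he0, hu] at this ⊢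
    linear_combination this
  set p : Polynomial (MvPolynomial (Fin 2) ℂ) := Polynomial.X - Polynomial.C 1 with hp'
  set q : Polynomial (MvPolynomial (Fin 2) ℂ) := Polynomial.X ^ 2 + Polynomial.X + Polynomial.C 1 with hq'
  have hpq : p * q = Polynomial.X ^ 3 - 1 := by
    rw [hp', hq', Polynomial.C_1]
    ring
  have hprime : Prime p := Polynomial.prime_X_sub_C 1
  have hndq : ¬ p ∣ q := by
    rw [hp', Polynomial.dvd_iff_isRoot, hq']
    simp [Polynomial.IsRoot]
    intro h
    have hh := congrArg (MvPolynomial.eval (fun _ => (0 : ℂ))) h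
    simp at hh
    norm_num at hh
  have hndm : ¬ p ∣ (Polynomial.X ^ 3 - 1 + Polynomial.C u) := by
    rw [hp', Polynomial.dvd_iff_isRoot]
    simp [Polynomial.IsRoot]
    exact hune
  have heyne : e y ≠ 0 := by
    simp only [ne_eq, EmbeddingLike.map_eq_zero_iff]
    exact hy
  have hdes := descent p q (Polynomial.X ^ 3 - 1 + Polynomial.C u) hprime (by rw [hp', Polynomial.natDegree_X_sub_C]; norm_num) hndq hndm
    (e y).natDegree (e x) (e y) heyne le_rfl
  rw [hpq] at hdes
  exact hdes heR

set_option maxHeartbeats 1000000 in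
set_option synthInstance.maxHeartbeats 400000 in
/-- `((w³-1)+(z³-1)(s²-1))/(w³-1)` is not a square in `ℂ(s,z,w)`. -/
lemma not_square (t : Kszw) :
    t ^ 2 ≠ ((wK ^ 3 - 1) + (zK ^ 3 - 1) * (sK ^ 2 - 1)) / (wK ^ 3 - 1) := by
  intro ht
  set A : MvPolynomial (Fin 3) ℂ := X 2 ^ 3 - 1 with hA
  set B : MvPolynomial (Fin 3) ℂ := (X 1 ^ 3 - 1) * (X 0 ^ 2 - 1) with hB
  have hinj : Function.Injective (algebraMap (MvPolynomial (Fin 3) ℂ) Kszw) :=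
    IsFractionRing.injective _ _
  have hAne : A ≠ 0 := by
    intro h
    have hh := congrArg (MvPolynomial.eval (fun _ => (2 : ℂ))) h
    simp [hA] at hh
    norm_num at hh
  have haA : (wK ^ 3 - 1 : Kszw) = algebraMap _ _ A := by
    simp [wK, hA, map_sub, map_pow, map_one]
  have habAB : (wK ^ 3 - 1) + (zK ^ 3 - 1) * (sK ^ 2 - 1)
      = algebraMap (MvPolynomial (Fin 3) ℂ) Kszw (A + B) := by
    simp [wK, zK, sK, hA, hB]
  have ha : (wK ^ 3 - 1 : Kszw) ≠ 0 := by
    rw [haA]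
    simpa using fun h => hAne (hinj (by simpa using h))
  obtain ⟨x, y, hy, hxy⟩ := IsFractionRing.div_surjective (A := MvPolynomial (Fin 3) ℂ) t
  have hyK : algebraMap (MvPolynomial (Fin 3) ℂ) Kszw y ≠ 0 :=
    IsFractionRing.to_map_ne_zero_of_mem_nonZeroDivisors hy
  have hx : algebraMap (MvPolynomial (Fin 3) ℂ) Kszw x
      = t * algebraMap (MvPolynomial (Fin 3) ℂ) Kszw y := (div_eq_iff hyK).mp hxy
  have hK : (algebraMap (MvPolynomial (Fin 3) ℂ) Kszw x) ^ 2 * (wK ^ 3 - 1)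
      = (algebraMap (MvPolynomial (Fin 3) ℂ) Kszw y) ^ 2
        * ((wK ^ 3 - 1) + (zK ^ 3 - 1) * (sK ^ 2 - 1)) := by
    rw [hx, mul_pow, ht, div_mul_eq_mul_div, div_mul_cancel₀ _ ha]
    ring
  have hR : x ^ 2 * A = y ^ 2 * (A + B) := by
    apply hinj
    rw [map_mul, map_mul, map_pow, map_pow, ← haA, ← habAB]
    exact hK
  have hy0 : y ≠ 0 := nonZeroDivisors.ne_zero hy
  exact ring_core x y hy0 (by rw [hA, hB] at hR; exact hR) 

set_option maxHeartbeats 2000000 in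
set_option synthInstance.maxHeartbeats 2000000 in
/-- The polynomial `(w³-1)T² - (w³-1) - (z³-1)(s²-1)` is irreducible over `ℂ(s,z,w)`. -/
theorem quadric_irreducible :
    Irreducible ((Polynomial.C (wK ^ 3 - 1) * Polynomial.X ^ 2
      - Polynomial.C (wK ^ 3 - 1)
      - Polynomial.C ((zK ^ 3 - 1) * (sK ^ 2 - 1))) : Polynomial Kszw) := by
  classical
  have hinj : Function.Injective (algebraMap (MvPolynomial (Fin 3) ℂ) Kszw) :=
    IsFractionRing.injective _ _
  have hAne : (X 2 ^ 3 - 1 : MvPolynomial (Fin 3) ℂ) ≠ 0 := by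
    intro h
    have hh := congrArg (MvPolynomial.eval (fun _ => (2 : ℂ))) h
    simp at hh
    norm_num at hh
  have ha : (wK ^ 3 - 1 : Kszw) ≠ 0 := by
    have h1 : (wK ^ 3 - 1 : Kszw) = algebraMap _ _ (X 2 ^ 3 - 1 : MvPolynomial (Fin 3) ℂ) := by
      simp [wK, map_sub, map_pow, map_one]
    rw [h1]
    simpa using fun h => hAne (hinj (by simpa using h))
  set a : Kszw := wK ^ 3 - 1 with ha'
  set b : Kszw := (zK ^ 3 - 1) * (sK ^ 2 - 1) with hb'
  have hassoc : (Polynomial.C a * Polynomial.X ^ 2 - Polynomial.C a - Polynomial.C b)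
      = Polynomial.C a * (Polynomial.X ^ 2 - Polynomial.C ((a + b) / a)) := by
    have h3 : Polynomial.C ((a + b) / a) * Polynomial.C a
        = Polynomial.C a + Polynomial.C b := by
      rw [← Polynomial.C_mul, div_mul_cancel₀ _ ha, map_add]
    have step : (Polynomial.C a * Polynomial.X ^ 2 - Polynomial.C a - Polynomial.C b
        : Polynomial Kszw)
        = Polynomial.C a * Polynomial.X ^ 2 - (Polynomial.C a + Polynomial.C b) := by ring
    rw [step, ← h3]
    ring
  rw [hassoc]
  have key : ∀ t : Kszw, t ^ 2 ≠ (a + b) / a := fun t => not_square t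
  have hirr : Irreducible ((Polynomial.X : Polynomial Kszw) ^ 2 - Polynomial.C ((a + b) / a)) :=
    X_pow_sub_C_irreducible_of_prime Nat.prime_two key
  have hu : IsUnit (Polynomial.C a : Polynomial Kszw) :=
    Polynomial.isUnit_C.mpr (isUnit_iff_ne_zero.mpr ha)
  exact (Associated.irreducible ⟨hu.unit, by rw [hu.unit_spec]; ring⟩ hirr)

end
end

section
/- With notation as above, the ring of invariants R̃^g equals ℂ[yₘyₙ (1 ≤ m ≤ n ≤ 3), x₁ⁱx₂ʲx₃ᵏ (0 ≤ i,j,k ≤ 2, i+j+k = 3, or (i,j,k)=(2,2,2))]. -/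
open MvPolynomial

noncomputable section

open MvPolynomial

noncomputable section

/-- `R̃ = ℂ[y₁,y₂,y₃,x₁,x₂,x₃]/(y₁²-x₁³+1, y₂²-x₂³+1, y₃²-x₃³+1)`, with the `y`'s
indexed by `Sum.inl` and the `x`'s by `Sum.inr`. -/
abbrev Rt : Type :=
  MvPolynomial (Fin 3 ⊕ Fin 3) ℂ ⧸
    Ideal.span {p : MvPolynomial (Fin 3 ⊕ Fin 3) ℂ |
      ∃ m : Fin 3, p = X (Sum.inl m) ^ 2 - X (Sum.inr m) ^ 3 + 1}

def yv (m : Fin 3) : Rt := Ideal.Quotient.mk _ (X (Sum.inl m))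

def xv (m : Fin 3) : Rt := Ideal.Quotient.mk _ (X (Sum.inr m))

/-- ω = (-1 + √-3)/2, a primitive cube root of unity. -/
def ω : ℂ := (-1 + Real.sqrt 3 * Complex.I) / 2


abbrev II : Ideal (MvPolynomial (Fin 3 ⊕ Fin 3) ℂ) :=
  Ideal.span {p : MvPolynomial (Fin 3 ⊕ Fin 3) ℂ |
      ∃ m : Fin 3, p = X (Sum.inl m) ^ 2 - X (Sum.inr m) ^ 3 + 1}

lemma homega : ω ^ 2 + ω + 1 = 0 := by
  have hs : (Real.sqrt 3 : ℂ)^2 = 3 := by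
    norm_cast
    rw [sq]
    exact Real.mul_self_sqrt (by norm_num)
  rw [ω]
  field_simp
  linear_combination Complex.I^2 * hs + 3 * Complex.I_sq

lemma homega3 : ω ^ 3 = 1 := by linear_combination (ω - 1) * homega

lemma hne1 : ω ≠ 1 := by
  intro h; have := homega; rw [h] at this; norm_num at this
lemma hnem1 : ω ≠ -1 := by
  intro h; have := homega; rw [h] at this; norm_num at this
lemma h2ne1 : ω ^ 2 ≠ 1 := by
  intro h
  have h2 : ω = -2 := by linear_combination homega - h
  rw [h2] at h; norm_num at h
lemma h2nem1 : ω ^ 2 ≠ -1 := by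
  intro h
  have h2 : ω = 0 := by linear_combination homega - h
  rw [h2] at h; norm_num at h

lemma eneq (A B : ℕ) (h : ¬(Even A ∧ B % 3 = 0)) : (-1:ℂ)^A * ω^B ≠ 1 := by
  have hB : ω ^ B = ω ^ (B % 3) := by
    conv_lhs => rw [← Nat.div_add_mod B 3]
    rw [pow_add, pow_mul, homega3, one_pow, one_mul]
  rw [hB]
  have hlt : B % 3 < 3 := Nat.mod_lt _ (by norm_num)
  rcases Nat.even_or_odd A with hA | hA
  · rw [hA.neg_one_pow, one_mul]
    have h0 : B % 3 ≠ 0 := fun hc => h ⟨hA, hc⟩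
    interval_cases hb : B % 3
    · exact absurd rfl h0
    · simpa using hne1
    · exact h2ne1
  · rw [hA.neg_one_pow]
    interval_cases hb : B % 3
    · norm_num
    · intro hc; exact hnem1 (by linear_combination -hc)
    · intro hc; exact h2nem1 (by linear_combination -hc)

abbrev gens : Set Rt :=
        ({p : Rt | ∃ m n : Fin 3, m ≤ n ∧ p = yv m * yv n} ∪
          {p : Rt | ∃ i j k : ℕ, i ≤ 2 ∧ j ≤ 2 ∧ k ≤ 2 ∧
            (i + j + k = 3 ∨ (i = 2 ∧ j = 2 ∧ k = 2)) ∧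
            p = xv 0 ^ i * xv 1 ^ j * xv 2 ^ k})

abbrev SS : Subalgebra ℂ Rt := Algebra.adjoin ℂ gens

lemma xcube (m : Fin 3) : xv m ^ 3 = yv m ^ 2 + 1 := by
  have hmem : (X (Sum.inl m) ^ 2 - X (Sum.inr m) ^ 3 + 1 : MvPolynomial (Fin 3 ⊕ Fin 3) ℂ) ∈
      Ideal.span {p : MvPolynomial (Fin 3 ⊕ Fin 3) ℂ |
        ∃ m : Fin 3, p = X (Sum.inl m) ^ 2 - X (Sum.inr m) ^ 3 + 1} :=
    Ideal.subset_span ⟨m, rfl⟩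
  have h0 : yv m ^ 2 - xv m ^ 3 + 1 = 0 := by
    rw [yv, xv, ← map_pow, ← map_pow, ← map_sub, ← map_one (Ideal.Quotient.mk _), ← map_add]
    exact (Ideal.Quotient.eq_zero_iff_mem).mpr hmem
  linear_combination -h0

lemma hy2mem (m : Fin 3) : yv m ^ 2 ∈ SS := by
  have hmem : yv m * yv m ∈ gens := Or.inl ⟨m, m, le_refl m, rfl⟩
  have := Algebra.subset_adjoin (R := ℂ) hmem
  simpa [sq] using this

lemma mem_Y (a0 a1 a2 : ℕ) (h : Even (a0 + a1 + a2)) :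
    yv 0 ^ a0 * yv 1 ^ a1 * yv 2 ^ a2 ∈ SS := by
  have key : ∀ e0 e1 e2 : ℕ, e0 ≤ 1 → e1 ≤ 1 → e2 ≤ 1 → (e0 + e1 + e2) % 2 = 0 →
      yv 0 ^ e0 * yv 1 ^ e1 * yv 2 ^ e2 ∈ SS := by
    intro e0 e1 e2 h0 h1 h2 hsum
    interval_cases e0 <;> interval_cases e1 <;> interval_cases e2 <;>
      first
        | omega
        | (simpa using one_mem SS)
        | (refine Algebra.subset_adjoin (Or.inl ⟨0, 1, by decide, ?_⟩); ring1)
        | (refine Algebra.subset_adjoin (Or.inl ⟨0, 2, by decide, ?_⟩); ring1)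
        | (refine Algebra.subset_adjoin (Or.inl ⟨1, 2, by decide, ?_⟩); ring1)
  have e : ∀ (z : Rt) (a : ℕ), z ^ a = (z ^ 2) ^ (a / 2) * z ^ (a % 2) := fun z a => by
    rw [← pow_mul, ← pow_add, Nat.div_add_mod]
  have heq : yv 0 ^ a0 * yv 1 ^ a1 * yv 2 ^ a2 =
      ((yv 0 ^ 2) ^ (a0 / 2) * (yv 1 ^ 2) ^ (a1 / 2) * (yv 2 ^ 2) ^ (a2 / 2)) *
        (yv 0 ^ (a0 % 2) * yv 1 ^ (a1 % 2) * yv 2 ^ (a2 % 2)) := by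
    rw [e (yv 0) a0, e (yv 1) a1, e (yv 2) a2]; ring
  rw [heq]
  refine mul_mem (mul_mem (mul_mem ?_ ?_) ?_) (key _ _ _ ?_ ?_ ?_ ?_)
  · exact pow_mem (hy2mem 0) _
  · exact pow_mem (hy2mem 1) _
  · exact pow_mem (hy2mem 2) _
  · omega
  · omega
  · omega
  · rw [Nat.even_iff] at h; omega

lemma hx3mem (m : Fin 3) : xv m ^ 3 ∈ SS := by
  rw [xcube]
  exact add_mem (hy2mem m) (one_mem SS)

lemma mem_X (b0 b1 b2 : ℕ) (h : (b0 + b1 + b2) % 3 = 0) :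
    xv 0 ^ b0 * xv 1 ^ b1 * xv 2 ^ b2 ∈ SS := by
  have key : ∀ e0 e1 e2 : ℕ, e0 ≤ 2 → e1 ≤ 2 → e2 ≤ 2 → (e0 + e1 + e2) % 3 = 0 →
      xv 0 ^ e0 * xv 1 ^ e1 * xv 2 ^ e2 ∈ SS := by
    intro e0 e1 e2 h0 h1 h2 hsum
    interval_cases e0 <;> interval_cases e1 <;> interval_cases e2 <;>
      first
        | omega
        | (simpa using one_mem SS)
        | (refine Algebra.subset_adjoin (Or.inr ⟨_, _, _, ?_, ?_, ?_, ?_, rfl⟩) <;> omega)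
  have e : ∀ (z : Rt) (a : ℕ), z ^ a = (z ^ 3) ^ (a / 3) * z ^ (a % 3) := fun z a => by
    rw [← pow_mul, ← pow_add, Nat.div_add_mod]
  have heq : xv 0 ^ b0 * xv 1 ^ b1 * xv 2 ^ b2 =
      ((xv 0 ^ 3) ^ (b0 / 3) * (xv 1 ^ 3) ^ (b1 / 3) * (xv 2 ^ 3) ^ (b2 / 3)) *
        (xv 0 ^ (b0 % 3) * xv 1 ^ (b1 % 3) * xv 2 ^ (b2 % 3)) := by
    rw [e (xv 0) b0, e (xv 1) b1, e (xv 2) b2]; ring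
  rw [heq]
  refine mul_mem (mul_mem (mul_mem ?_ ?_) ?_) (key _ _ _ ?_ ?_ ?_ ?_)
  · exact pow_mem (hx3mem 0) _
  · exact pow_mem (hx3mem 1) _
  · exact pow_mem (hx3mem 2) _
  · omega
  · omega
  · omega
  · omega

lemma gk_y (g : Rt ≃ₐ[ℂ] Rt) (hy : ∀ m : Fin 3, g (yv m) = -yv m) (k : ℕ) (m : Fin 3) :
    (g ^ k) (yv m) = (-1 : Rt) ^ k * yv m := by
  induction k with
  | zero => simp
  | succ n ih =>
      rw [pow_succ, AlgEquiv.mul_apply, hy m, map_neg, ih]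
      ring

lemma gk_x (g : Rt ≃ₐ[ℂ] Rt) (hx : ∀ m : Fin 3, g (xv m) = (algebraMap ℂ Rt ω) * xv m)
    (k : ℕ) (m : Fin 3) :
    (g ^ k) (xv m) = (algebraMap ℂ Rt ω) ^ k * xv m := by
  induction k with
  | zero => simp
  | succ n ih =>
      rw [pow_succ, AlgEquiv.mul_apply, hx m, map_mul, ih, AlgEquiv.commutes]
      ring


set_option maxHeartbeats 1600000 in
lemma key_sum (g : Rt ≃ₐ[ℂ] Rt) (hy : ∀ m : Fin 3, g (yv m) = -yv m)
    (hx : ∀ m : Fin 3, g (xv m) = (algebraMap ℂ Rt ω) * xv m)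
    (c : ℂ) (a0 a1 a2 b0 b1 b2 : ℕ) :
    (∑ k ∈ Finset.range 6,
      (g ^ k) (algebraMap ℂ Rt c *
        (yv 0 ^ a0 * yv 1 ^ a1 * yv 2 ^ a2 * xv 0 ^ b0 * xv 1 ^ b1 * xv 2 ^ b2))) ∈ SS := by
  have hk : ∀ k : ℕ,
      (g ^ k) (algebraMap ℂ Rt c *
        (yv 0 ^ a0 * yv 1 ^ a1 * yv 2 ^ a2 * xv 0 ^ b0 * xv 1 ^ b1 * xv 2 ^ b2)) =
      algebraMap ℂ Rt (c * ((-1 : ℂ) ^ (a0 + a1 + a2) * ω ^ (b0 + b1 + b2)) ^ k) *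
        (yv 0 ^ a0 * yv 1 ^ a1 * yv 2 ^ a2 * xv 0 ^ b0 * xv 1 ^ b1 * xv 2 ^ b2) := by
    intro k
    rw [map_mul, AlgEquiv.commutes, map_mul, map_mul, map_mul, map_mul, map_mul,
      map_pow, map_pow, map_pow, map_pow, map_pow, map_pow,
      gk_y g hy, gk_y g hy, gk_y g hy, gk_x g hx, gk_x g hx, gk_x g hx,
      map_mul, map_pow, map_mul, map_pow, map_pow, map_neg, map_one]
    ring
  simp only [hk]
  rw [← Finset.sum_mul, ← map_sum, ← Finset.mul_sum]
  by_cases h : Even (a0 + a1 + a2) ∧ (b0 + b1 + b2) % 3 = 0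
  · have hE : yv 0 ^ a0 * yv 1 ^ a1 * yv 2 ^ a2 * xv 0 ^ b0 * xv 1 ^ b1 * xv 2 ^ b2 ∈ SS := by
      have heq : yv 0 ^ a0 * yv 1 ^ a1 * yv 2 ^ a2 * xv 0 ^ b0 * xv 1 ^ b1 * xv 2 ^ b2 =
          (yv 0 ^ a0 * yv 1 ^ a1 * yv 2 ^ a2) * (xv 0 ^ b0 * xv 1 ^ b1 * xv 2 ^ b2) := by ring
      rw [heq]
      exact mul_mem (mem_Y _ _ _ h.1) (mem_X _ _ _ h.2)
    exact mul_mem (Subalgebra.algebraMap_mem _ _) hE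
  · have hne : (-1 : ℂ) ^ (a0 + a1 + a2) * ω ^ (b0 + b1 + b2) ≠ 1 := eneq _ _ h
    have h6 : ((-1 : ℂ) ^ (a0 + a1 + a2) * ω ^ (b0 + b1 + b2)) ^ 6 = 1 := by
      rw [mul_pow, pow_right_comm, pow_right_comm ω]
      norm_num
      rw [show (6 : ℕ) = 3 * 2 from rfl, pow_mul, homega3, one_pow, one_pow]
    rw [geom_sum_eq hne]
    have hz : c * ((((-1 : ℂ) ^ (a0 + a1 + a2) * ω ^ (b0 + b1 + b2)) ^ 6 - 1) /
        ((-1 : ℂ) ^ (a0 + a1 + a2) * ω ^ (b0 + b1 + b2) - 1)) = 0 := by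
      rw [h6, sub_self, zero_div, mul_zero]
    rw [hz]
    rw [map_zero]
    rw [zero_mul]
    exact zero_mem SS

set_option maxHeartbeats 1600000 in
lemma claim_lemma (g : Rt ≃ₐ[ℂ] Rt) (hy : ∀ m : Fin 3, g (yv m) = -yv m)
    (hx : ∀ m : Fin 3, g (xv m) = (algebraMap ℂ Rt ω) * xv m)
    (P : MvPolynomial (Fin 3 ⊕ Fin 3) ℂ) :
    (∑ k ∈ Finset.range 6, (g ^ k) (Ideal.Quotient.mk II P : Rt)) ∈ SS := by
  induction P using MvPolynomial.induction_on' with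
  | monomial u c =>
      have hmono : (Ideal.Quotient.mk II (monomial u c) : Rt) =
          algebraMap ℂ Rt c *
            (yv 0 ^ u (Sum.inl 0) * yv 1 ^ u (Sum.inl 1) * yv 2 ^ u (Sum.inl 2) *
             xv 0 ^ u (Sum.inr 0) * xv 1 ^ u (Sum.inr 1) * xv 2 ^ u (Sum.inr 2)) := by
        have hpoly : (monomial u c : MvPolynomial (Fin 3 ⊕ Fin 3) ℂ) =
            C c * (X (Sum.inl 0) ^ u (Sum.inl 0) * X (Sum.inl 1) ^ u (Sum.inl 1) *
              X (Sum.inl 2) ^ u (Sum.inl 2) * X (Sum.inr 0) ^ u (Sum.inr 0) *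
              X (Sum.inr 1) ^ u (Sum.inr 1) * X (Sum.inr 2) ^ u (Sum.inr 2)) := by
          rw [monomial_eq, Finsupp.prod_fintype _ _ fun i => pow_zero _,
            Fintype.prod_sum_type, Fin.prod_univ_three, Fin.prod_univ_three]
          ring
        rw [hpoly, map_mul, map_mul, map_mul, map_mul, map_mul, map_mul,
          map_pow, map_pow, map_pow, map_pow, map_pow, map_pow]
        rfl
      rw [hmono]
      exact key_sum g hy hx c _ _ _ _ _ _
  | add p q hp hq =>
      simp only [map_add, Finset.sum_add_distrib]
      exact add_mem hp hq

set_option maxHeartbeats 1600000 in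
lemma fwd (g : Rt ≃ₐ[ℂ] Rt) (hy : ∀ m : Fin 3, g (yv m) = -yv m)
    (hx : ∀ m : Fin 3, g (xv m) = (algebraMap ℂ Rt ω) * xv m)
    (r : Rt) (hr : g r = r) : r ∈ SS := by
  obtain ⟨P, rfl⟩ := Ideal.Quotient.mk_surjective (I := II) r
  have hk : ∀ k : ℕ,
      (g ^ k) (Ideal.Quotient.mk II P : Rt) = (Ideal.Quotient.mk II P : Rt) := by
    intro k
    induction k with
    | zero => rfl
    | succ n ih => rw [pow_succ, AlgEquiv.mul_apply, hr, ih]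
  have h6 : (∑ k ∈ Finset.range 6, (g ^ k) (Ideal.Quotient.mk II P : Rt)) =
      (6 : ℂ) • (Ideal.Quotient.mk II P : Rt) := by
    simp only [hk]
    rw [Finset.sum_const, Finset.card_range, ← Nat.cast_smul_eq_nsmul ℂ]
    norm_num
  have hmem := claim_lemma g hy hx P
  rw [h6] at hmem
  have hfin := SS.smul_mem hmem ((6 : ℂ)⁻¹)
  rwa [smul_smul, inv_mul_cancel₀ (by norm_num : (6 : ℂ) ≠ 0), one_smul] at hfin

set_option maxHeartbeats 1600000 in
lemma bwd (g : Rt ≃ₐ[ℂ] Rt) (hy : ∀ m : Fin 3, g (yv m) = -yv m)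
    (hx : ∀ m : Fin 3, g (xv m) = (algebraMap ℂ Rt ω) * xv m)
    (r : Rt) (hr : r ∈ SS) : g r = r := by
  refine Algebra.adjoin_induction ?_ ?_ ?_ ?_ hr
  · rintro p (⟨m, n, hmn, rfl⟩ | ⟨i, j, k, hi, hj, hk, hs, rfl⟩)
    · rw [map_mul, hy, hy]; ring
    · rw [map_mul, map_mul, map_pow, map_pow, map_pow, hx 0, hx 1, hx 2]
      have hw : (algebraMap ℂ Rt ω) ^ (i + j + k) = 1 := by
        rcases hs with hs | ⟨rfl, rfl, rfl⟩
        · rw [hs, ← map_pow, homega3, map_one]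
        · rw [← map_pow, show (2 + 2 + 2 : ℕ) = 3 * 2 from rfl, pow_mul, homega3,
            one_pow, map_one]
      have hre : ((algebraMap ℂ Rt ω) * xv 0) ^ i * ((algebraMap ℂ Rt ω) * xv 1) ^ j *
          ((algebraMap ℂ Rt ω) * xv 2) ^ k =
          (algebraMap ℂ Rt ω) ^ (i + j + k) * (xv 0 ^ i * xv 1 ^ j * xv 2 ^ k) := by
        ring
      rw [hre, hw, one_mul]
  · intro c; exact g.commutes c
  · intro x y _ _ hx' hy'; rw [map_add, hx', hy']
  · intro x y _ _ hx' hy'; rw [map_mul, hx', hy']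

set_option maxHeartbeats 1600000

/-- The full invariant ring `R̃^g` equals
`ℂ[yₘyₙ (1 ≤ m ≤ n ≤ 3), x₁ⁱx₂ʲx₃ᵏ (0 ≤ i,j,k ≤ 2, i+j+k = 3 or (i,j,k) = (2,2,2))]`. -/
theorem g_invariants (g : Rt ≃ₐ[ℂ] Rt)
    (hy : ∀ m : Fin 3, g (yv m) = -yv m)
    (hx : ∀ m : Fin 3, g (xv m) = (algebraMap ℂ Rt ω) * xv m)
    (r : Rt) :
    g r = r ↔
      r ∈ Algebra.adjoin ℂ
        ({p : Rt | ∃ m n : Fin 3, m ≤ n ∧ p = yv m * yv n} ∪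
          {p : Rt | ∃ i j k : ℕ, i ≤ 2 ∧ j ≤ 2 ∧ k ≤ 2 ∧
            (i + j + k = 3 ∨ (i = 2 ∧ j = 2 ∧ k = 2)) ∧
            p = xv 0 ^ i * xv 1 ^ j * xv 2 ^ k}) := by
  exact ⟨fwd g hy hx r, bwd g hy hx r⟩

end
end
end
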